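/- arXiv:1106.2203 — 2 statements merged into one kernel-verified Lean document; each statement's English description precedes it below -/
import Mathlib

section
/- Let S = ⟨S,+,0⟩ be a join semilattice with 0. For a congruence θ on S, let h(θ) be the set of θ-closed ideals of S; for a set H of ideals of S, let ρ(H) relate x,y iff x and y belong to exactly the same ideals in H. Then for every congruence θ, ρ(h(θ)) = θ. -/
variable {S : Type*} [SemilatticeSup S] [OrderBot S]

/-- A congruence of a join semilattice with zero: an equivalence relation
compatible with joins. -/
def IsSemilatticeCong (θ : S → S → Prop) : Prop :=
  Equivalence θ ∧ ∀ x y z : S, θ x y → θ (x ⊔ z) (y ⊔ z)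

/-- An ideal `I` is `θ`-closed if `x ∈ I` and `x θ y` imply `y ∈ I`. -/
def ThetaClosed (θ : S → S → Prop) (I : Order.Ideal S) : Prop :=
  ∀ x ∈ I, ∀ y, θ x y → y ∈ I

/-- `h θ` is the set of `θ`-closed ideals. -/
def hMap (θ : S → S → Prop) : Set (Order.Ideal S) :=
  {I | ThetaClosed θ I}

/-- `ρ H` relates `x` and `y` iff they lie in exactly the same ideals of `H`. -/
def rhoMap (H : Set (Order.Ideal S)) : S → S → Prop :=
  fun x y => ∀ I ∈ H, (x ∈ I ↔ y ∈ I)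

/-- The principal θ-ideal of `x`: elements `z` with `(z ⊔ x) θ x`. -/
def thetaIdeal (θ : S → S → Prop) (hθ : IsSemilatticeCong θ) (x : S) : Order.Ideal S where
  carrier := {z | θ (z ⊔ x) x}
  lower' := by
    intro a b hab ha
    simp only [Set.mem_setOf_eq] at *
    have h1 := hθ.2 _ _ b ha
    have e : a ⊔ x ⊔ b = a ⊔ x := by
      rw [sup_assoc, sup_comm x b, ← sup_assoc, sup_eq_left.2 hab]
    rw [e] at h1
    -- h1 : θ (a ⊔ x) (x ⊔ b)
    have h2 : θ (b ⊔ x) (a ⊔ x) := by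
      rw [sup_comm b x]; exact hθ.1.symm h1
    exact hθ.1.trans h2 ha
  nonempty' := ⟨x, by simp only [Set.mem_setOf_eq, sup_idem]; exact hθ.1.refl x⟩
  directed' := by
    intro a ha b hb
    refine ⟨a ⊔ b, ?_, le_sup_left, le_sup_right⟩
    simp only [Set.mem_setOf_eq] at *
    have h1 := hθ.2 _ _ (b ⊔ x) ha
    have e : a ⊔ x ⊔ (b ⊔ x) = a ⊔ b ⊔ x := by
      rw [sup_sup_sup_comm, sup_idem]
    rw [e] at h1
    have h2 : θ (x ⊔ (b ⊔ x)) x := by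
      rw [sup_comm x (b ⊔ x), sup_assoc, sup_idem]; exact hb
    exact hθ.1.trans h1 h2

theorem mem_thetaIdeal {θ : S → S → Prop} {hθ : IsSemilatticeCong θ} {x z : S} :
    z ∈ thetaIdeal θ hθ x ↔ θ (z ⊔ x) x := Iff.rfl

theorem thetaIdeal_closed (θ : S → S → Prop) (hθ : IsSemilatticeCong θ) (x : S) :
    ThetaClosed θ (thetaIdeal θ hθ x) := by
  intro a ha b hab
  rw [mem_thetaIdeal] at *
  exact hθ.1.trans (hθ.2 _ _ x (hθ.1.symm hab)) ha

/-- For every congruence `θ` of a join semilattice with zero, `ρ(h(θ)) = θ`. -/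
theorem rho_h_eq (θ : S → S → Prop) (hθ : IsSemilatticeCong θ) :
    rhoMap (hMap θ) = θ := by
  funext x y
  apply propext
  constructor
  · intro h
    have hx : x ∈ thetaIdeal θ hθ x := by
      rw [mem_thetaIdeal, sup_idem]; exact hθ.1.refl x
    have hy : y ∈ thetaIdeal θ hθ x :=
      (h _ (thetaIdeal_closed θ hθ x)).1 hx
    have hy' : y ∈ thetaIdeal θ hθ y := by
      rw [mem_thetaIdeal, sup_idem]; exact hθ.1.refl y
    have hx' : x ∈ thetaIdeal θ hθ y :=
      (h _ (thetaIdeal_closed θ hθ y)).2 hy'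
    rw [mem_thetaIdeal] at hx' hy
    -- hy : θ (y ⊔ x) x, hx' : θ (x ⊔ y) y
    have := hθ.1.trans (hθ.1.symm hy) (by rw [sup_comm]; exact hx')
    exact this
  · intro h I hI
    exact ⟨fun hx => hI x hx y h, fun hy => hI y hy x (hθ.1.symm h)⟩
end

section
/- Let S = ⟨S,+,0,F⟩ be a semilattice with operators, and let η, τ denote the least and greatest congruences with the same 0-class as a given congruence. If congruences ζ, γ, χ satisfy η(ζ) ≤ η(γ) and τ(χ) ≤ τ(γ), then η(η(ζ) ∨ τ(ζ ∧ χ)) ≤ η(γ). -/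
variable {S : Type*} [SemilatticeSup S] [OrderBot S]

/-- An operator on a join semilattice with zero: a unary `(⊔,0)`-endomorphism. -/
def IsOperator (f : S → S) : Prop :=
  (∀ x y : S, f (x ⊔ y) = f x ⊔ f y) ∧ f ⊥ = ⊥

/-- A congruence of a join semilattice with zero and a set `F` of operators. -/
def IsCong (F : Set (S → S)) (θ : S → S → Prop) : Prop :=
  Equivalence θ ∧ (∀ x y z : S, θ x y → θ (x ⊔ z) (y ⊔ z)) ∧
    ∀ f ∈ F, ∀ x y, θ x y → θ (f x) (f y)

/-- Membership in the monoid `F†` generated by `F` (including the identity). -/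
inductive InMonoid (F : Set (S → S)) : (S → S) → Prop
  | id : InMonoid F id
  | base (f : S → S) : f ∈ F → InMonoid F f
  | comp (f g : S → S) : InMonoid F f → InMonoid F g → InMonoid F (f ∘ g)

/-- `η(θ)` : the least congruence with the same `0`-class as `θ`:
`x η(θ) y` iff `x + z = y + z` for some `z` with `z θ 0`. -/
def etaCong (θ : S → S → Prop) : S → S → Prop :=
  fun x y => ∃ z, θ z ⊥ ∧ x ⊔ z = y ⊔ z

/-- `τ(θ)` : the greatest congruence with the same `0`-class as `θ`:
`x τ(θ) y` iff for all `h ∈ F†`, `h x` is in the `0`-class iff `h y` is. -/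
def tauCong (F : Set (S → S)) (θ : S → S → Prop) : S → S → Prop :=
  fun x y => ∀ h : S → S, InMonoid F h → (θ (h x) ⊥ ↔ θ (h y) ⊥)

/-- The congruence generated by a relation `r`; joins in the congruence
lattice are congruences generated by unions. -/
def congGen (F : Set (S → S)) (r : S → S → Prop) : S → S → Prop :=
  fun x y => ∀ θ : S → S → Prop, IsCong F θ → (∀ a b, r a b → θ a b) → θ x y

section Aux

variable {F : Set (S → S)}

theorem monoid_map_sup (hF : ∀ f ∈ F, IsOperator f) {h : S → S}
    (hh : InMonoid F h) : ∀ a b : S, h (a ⊔ b) = h a ⊔ h b := by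
  induction hh with
  | id => intro a b; rfl
  | base f hf => exact (hF f hf).1
  | comp f g hf hg ihf ihg =>
      intro a b
      show f (g (a ⊔ b)) = f (g a) ⊔ f (g b)
      rw [ihg a b, ihf]

theorem monoid_map_bot (hF : ∀ f ∈ F, IsOperator f) {h : S → S}
    (hh : InMonoid F h) : h ⊥ = ⊥ := by
  induction hh with
  | id => rfl
  | base f hf => exact (hF f hf).2
  | comp f g hf hg ihf ihg => show f (g ⊥) = ⊥; rw [ihg, ihf]

theorem monoid_mono (hF : ∀ f ∈ F, IsOperator f) {h : S → S}
    (hh : InMonoid F h) {a b : S} (hab : a ≤ b) : h a ≤ h b := by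
  have : h a ⊔ h b = h b := by
    rw [← monoid_map_sup hF hh, sup_eq_right.mpr hab]
  exact le_of_sup_eq this

omit [OrderBot S] in
theorem monoid_map_rel {θ : S → S → Prop} (hθ : IsCong F θ) {h : S → S}
    (hh : InMonoid F h) : ∀ a b : S, θ a b → θ (h a) (h b) := by
  induction hh with
  | id => intro a b hab; exact hab
  | base f hf => exact hθ.2.2 f hf
  | comp f g hf hg ihf ihg => intro a b hab; exact ihf _ _ (ihg _ _ hab)

theorem cong_sup_bot_right {θ : S → S → Prop} (hθ : IsCong F θ) {a w : S}
    (hw : θ w ⊥) : θ (a ⊔ w) a := by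
  have h := hθ.2.1 w ⊥ a hw
  rwa [sup_comm w a, bot_sup_eq] at h

theorem cong_bot_of_le {θ : S → S → Prop} (hθ : IsCong F θ) {a b : S}
    (hab : a ≤ b) (hb : θ b ⊥) : θ a ⊥ := by
  have h1 : θ (a ⊔ b) a := cong_sup_bot_right hθ hb
  rw [sup_eq_right.mpr hab] at h1
  exact hθ.1.trans (hθ.1.symm h1) hb

theorem cong_sup_bot {θ : S → S → Prop} (hθ : IsCong F θ) {a b : S}
    (ha : θ a ⊥) (hb : θ b ⊥) : θ (a ⊔ b) ⊥ :=
  hθ.1.trans (cong_sup_bot_right hθ hb) ha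

theorem cong_sup_bot_iff {θ : S → S → Prop} (hθ : IsCong F θ) {a b : S} :
    θ (a ⊔ b) ⊥ ↔ θ a ⊥ ∧ θ b ⊥ :=
  ⟨fun h => ⟨cong_bot_of_le hθ le_sup_left h, cong_bot_of_le hθ le_sup_right h⟩,
   fun h => cong_sup_bot hθ h.1 h.2⟩

theorem eta_refl {θ : S → S → Prop} (hθ : IsCong F θ) (a : S) : etaCong θ a a :=
  ⟨⊥, hθ.1.refl ⊥, rfl⟩

theorem eta_symm {θ : S → S → Prop} {a b : S} (h : etaCong θ a b) : etaCong θ b a := by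
  obtain ⟨w, hw, he⟩ := h; exact ⟨w, hw, he.symm⟩

theorem eta_sup {θ : S → S → Prop} {a b : S} (h : etaCong θ a b) (c : S) :
    etaCong θ (a ⊔ c) (b ⊔ c) := by
  obtain ⟨w, hw, he⟩ := h
  exact ⟨w, hw, by rw [sup_right_comm, he, sup_right_comm]⟩

theorem eta_le {θ : S → S → Prop} (hθ : IsCong F θ) {a b : S}
    (h : etaCong θ a b) : θ a b := by
  obtain ⟨w, hw, he⟩ := h
  have h1 : θ (a ⊔ w) a := cong_sup_bot_right hθ hw
  have h2 : θ (b ⊔ w) b := cong_sup_bot_right hθ hw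
  rw [he] at h1
  exact hθ.1.trans (hθ.1.symm h1) h2

theorem eta_map (hF : ∀ f ∈ F, IsOperator f) {θ : S → S → Prop} (hθ : IsCong F θ)
    {h : S → S} (hh : InMonoid F h) {a b : S} (hab : etaCong θ a b) :
    etaCong θ (h a) (h b) := by
  obtain ⟨w, hw, he⟩ := hab
  refine ⟨h w, ?_, ?_⟩
  · have := monoid_map_rel hθ hh w ⊥ hw
    rwa [monoid_map_bot hF hh] at this
  · rw [← monoid_map_sup hF hh, ← monoid_map_sup hF hh, he]

theorem tau_sup (hF : ∀ f ∈ F, IsOperator f) {θ : S → S → Prop} (hθ : IsCong F θ)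
    {a b : S} (ht : tauCong F θ a b) (c : S) : tauCong F θ (a ⊔ c) (b ⊔ c) := by
  intro h hh
  rw [monoid_map_sup hF hh, monoid_map_sup hF hh,
    cong_sup_bot_iff hθ, cong_sup_bot_iff hθ, ht h hh]

theorem tau_op {θ : S → S → Prop} {f : S → S} (hf : f ∈ F)
    {a b : S} (ht : tauCong F θ a b) : tauCong F θ (f a) (f b) := fun h hh =>
  ht (h ∘ f) (InMonoid.comp h f hh (InMonoid.base f hf))

end Aux

/-- If congruences `ζ, γ, χ` of a semilattice with operators satisfy
`η(ζ) ≤ η(γ)` and `τ(χ) ≤ τ(γ)`, then `η(η(ζ) ∨ τ(ζ ∧ χ)) ≤ η(γ)`. -/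
theorem new_property (F : Set (S → S)) (hF : ∀ f ∈ F, IsOperator f)
    (ζ γ χ : S → S → Prop)
    (hζ : IsCong F ζ) (hγ : IsCong F γ) (hχ : IsCong F χ)
    (h1 : ∀ x y, etaCong ζ x y → etaCong γ x y)
    (h2 : ∀ x y, tauCong F χ x y → tauCong F γ x y) :
    ∀ x y, etaCong (congGen F
        (fun a b => etaCong ζ a b ∨ tauCong F (fun u v => ζ u v ∧ χ u v) a b)) x y →
      etaCong γ x y := by
  classical
  set δ : S → S → Prop := fun u v => ζ u v ∧ χ u v with hδdef
  have hδ : IsCong F δ := by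
    refine ⟨⟨fun a => ⟨hζ.1.refl a, hχ.1.refl a⟩,
      fun h => ⟨hζ.1.symm h.1, hχ.1.symm h.2⟩,
      fun h h' => ⟨hζ.1.trans h.1 h'.1, hχ.1.trans h.2 h'.2⟩⟩,
      fun x y z h => ⟨hζ.2.1 x y z h.1, hχ.2.1 x y z h.2⟩,
      fun f hf x y h => ⟨hζ.2.2 f hf x y h.1, hχ.2.2 f hf x y h.2⟩⟩
  set Gen : S → S → Prop := fun a b => etaCong ζ a b ∨ tauCong F δ a b with hGen
  -- Gen is reflexive, symmetric, join- and operator-compatible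
  have gen_refl : ∀ a, Gen a a := fun a => Or.inl (eta_refl hζ a)
  have gen_symm : ∀ a b, Gen a b → Gen b a := by
    rintro a b (h | h)
    · exact Or.inl (eta_symm h)
    · exact Or.inr (fun g hg => (h g hg).symm)
  have gen_sup : ∀ a b c, Gen a b → Gen (a ⊔ c) (b ⊔ c) := by
    rintro a b c (h | h)
    · exact Or.inl (eta_sup h c)
    · exact Or.inr (tau_sup hF hδ h c)
  have gen_op : ∀ f ∈ F, ∀ a b, Gen a b → Gen (f a) (f b) := by
    rintro f hf a b (h | h)
    · exact Or.inl (eta_map hF hζ (InMonoid.base f hf) h)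
    · exact Or.inr (tau_op hf h)
  set Θ : S → S → Prop := Relation.TransGen Gen with hΘ
  have Θ_sup : ∀ a b c, Θ a b → Θ (a ⊔ c) (b ⊔ c) := by
    intro a b c h
    induction h with
    | single hr => exact Relation.TransGen.single (gen_sup _ _ c hr)
    | tail _ hr ih => exact ih.tail (gen_sup _ _ c hr)
  have Θ_op : ∀ f ∈ F, ∀ a b, Θ a b → Θ (f a) (f b) := by
    intro f hf a b h
    induction h with
    | single hr => exact Relation.TransGen.single (gen_op f hf _ _ hr)
    | tail _ hr ih => exact ih.tail (gen_op f hf _ _ hr)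
  have Θ_symm : ∀ a b, Θ a b → Θ b a := by
    intro a b h
    induction h with
    | single hr => exact Relation.TransGen.single (gen_symm _ _ hr)
    | tail _ hr ih =>
        exact Relation.TransGen.trans (Relation.TransGen.single (gen_symm _ _ hr)) ih
  have Θ_cong : IsCong F Θ :=
    ⟨⟨fun a => Relation.TransGen.single (gen_refl a),
      fun h => Θ_symm _ _ h, fun h h' => Relation.TransGen.trans h h'⟩,
      fun x y z h => Θ_sup x y z h, Θ_op⟩
  -- The invariant
  set Q : S → Prop := fun z => ∀ h : S → S, InMonoid F h →
    (χ (h z) ⊥ → ζ (h z) ⊥) ∧ γ (h z) ⊥ with hQ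
  have Qbot : Q ⊥ := by
    intro h hh
    rw [monoid_map_bot hF hh]
    exact ⟨fun _ => hζ.1.refl ⊥, hγ.1.refl ⊥⟩
  -- one upward step preserves Q
  have Qstep : ∀ x y : S, Gen x y → y ≤ x → Q y → Q x := by
    rintro x y (hg | hg) hyx hQy
    · -- eta step
      intro h hh
      have hxy : etaCong ζ (h x) (h y) := eta_map hF hζ hh hg
      constructor
      · intro hχx
        have hle : h y ≤ h x := monoid_mono hF hh hyx
        have hχy : χ (h y) ⊥ := cong_bot_of_le hχ hle hχx
        have hζy : ζ (h y) ⊥ := (hQy h hh).1 hχy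
        obtain ⟨w, hw, he⟩ := hxy
        have e1 : ζ (h x ⊔ w) (h x) := cong_sup_bot_right hζ hw
        have e2 : ζ (h y ⊔ w) (h y) := cong_sup_bot_right hζ hw
        rw [he] at e1
        exact hζ.1.trans (hζ.1.trans (hζ.1.symm e1) e2) hζy
      · have hγxy : γ (h x) (h y) := eta_le hγ (h1 _ _ hxy)
        exact hγ.1.trans hγxy (hQy h hh).2
    · -- tau step
      have htauχ : tauCong F χ x y := by
        intro h hh
        constructor
        · intro hχx
          exact cong_bot_of_le hχ (monoid_mono hF hh hyx) hχx
        · intro hχy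
          have hζy : ζ (h y) ⊥ := (hQy h hh).1 hχy
          have hδx : δ (h x) ⊥ := (hg h hh).2 ⟨hζy, hχy⟩
          exact hδx.2
      have htauγ : tauCong F γ x y := h2 x y htauχ
      intro h hh
      constructor
      · intro hχx
        have hχy : χ (h y) ⊥ := cong_bot_of_le hχ (monoid_mono hF hh hyx) hχx
        have hζy : ζ (h y) ⊥ := (hQy h hh).1 hχy
        exact ((hg h hh).2 ⟨hζy, hχy⟩).1
      · exact (htauγ h hh).2 (hQy h hh).2
  -- main chain lemma
  have main : ∀ a b : S, Θ a b → ∃ u : S, a ≤ u ∧ ∀ c, Q (b ⊔ c) → Q (u ⊔ c) := by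
    intro a b h
    induction h with
    | single hr =>
        rename_i b'
        refine ⟨a ⊔ b', le_sup_left, fun c hq => ?_⟩
        have hstep : Gen (a ⊔ (b' ⊔ c)) (b' ⊔ (b' ⊔ c)) := gen_sup _ _ _ hr
        rw [sup_left_idem] at hstep
        have : Q (a ⊔ (b' ⊔ c)) := Qstep _ _ hstep le_sup_right hq
        rwa [← sup_assoc] at this
    | tail hab hr ih =>
        rename_i m b'
        obtain ⟨u, hau, hu⟩ := ih
        refine ⟨u ⊔ (m ⊔ b'), le_trans hau le_sup_left, fun c hq => ?_⟩
        -- first: one step from b' up to m ⊔ b'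
        have hstep : Gen (m ⊔ (b' ⊔ c)) (b' ⊔ (b' ⊔ c)) := gen_sup _ _ _ hr
        rw [sup_left_idem] at hstep
        have hq2 : Q (m ⊔ (b' ⊔ c)) := Qstep _ _ hstep le_sup_right hq
        -- then apply hu with c := (m ⊔ b') ⊔ c
        have hq3 : Q (m ⊔ ((m ⊔ b') ⊔ c)) := by
          rwa [show m ⊔ ((m ⊔ b') ⊔ c) = m ⊔ (b' ⊔ c) from by
            rw [← sup_assoc, sup_left_idem, sup_assoc]]
        have := hu ((m ⊔ b') ⊔ c) hq3
        rwa [← sup_assoc] at this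
  -- conclude
  rintro x y ⟨z, hz, hxy⟩
  have hΘz : Θ z ⊥ := hz Θ Θ_cong (fun a b hr => Relation.TransGen.single hr)
  obtain ⟨u, hzu, hu⟩ := main z ⊥ hΘz
  have hQu : Q u := by
    have := hu ⊥ (by rwa [sup_idem])
    rwa [sup_bot_eq] at this
  have hγu : γ u ⊥ := (hQu id InMonoid.id).2
  exact ⟨z, cong_bot_of_le hγ hzu hγu, hxy⟩
end
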